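/- arXiv:2605.19306 — 2 statements merged into one kernel-verified Lean document; each statement's English description precedes it below -/
import Mathlib

section
/- (Projection onto the downward hull) Let Q ⊆ ℝ^m be nonempty closed convex and Q⁺ := Q - ℝ^m₊. For every z̃ ∈ ℝ^m, the metric projection of z̃ onto Q⁺ equals min(z̃, y*) componentwise, where y* is any minimizer over y ∈ Q of ‖(z̃ - y)₊‖², with (·)₊ denoting the componentwise positive part. -/
def extDownHull {m : ℕ} (Q : Set (EuclideanSpace ℝ (Fin m))) :
    Set (EuclideanSpace ℝ (Fin m)) :=
  {z | ∃ y ∈ Q, ∃ u : EuclideanSpace ℝ (Fin m), (∀ i, 0 ≤ u i) ∧ z = y - u}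

/-!
The downward hull `Q⁺ = Q - ℝ^m₊` is convex, so its nearest point to `z` is unique, and it
suffices to show that `q = min(z, y*)` is one. For `w = y - u ∈ Q⁺` every coordinate satisfies
`(z_i - y_i)₊ ≤ |z_i - w_i|`, while `z - q = (z - y*)₊`; hence
`‖z - q‖² = ‖(z - y*)₊‖² ≤ ‖(z - y)₊‖² ≤ ‖z - w‖²`.
-/

open Finset

theorem eq_of_forall_dist_le_of_convex {E : Type*} [NormedAddCommGroup E] [NormedSpace ℝ E]
    [StrictConvexSpace ℝ E] {K : Set E} (hK : Convex ℝ K) {z p q : E} (hp : p ∈ K) (hq : q ∈ K)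
    (hpmin : ∀ w ∈ K, dist z p ≤ dist z w) (hqmin : ∀ w ∈ K, dist z q ≤ dist z w) : p = q := by
  by_contra hpq
  have hnorm : ‖z - p‖ = ‖z - q‖ := by
    simpa only [dist_eq_norm] using le_antisymm (hpmin q hq) (hqmin p hp)
  have hmid_mem : (1 / 2 : ℝ) • (p + q) ∈ K := by
    simpa only [smul_add] using hK hp hq (by norm_num) (by norm_num) (by norm_num)
  have hlt := (norm_midpoint_lt_iff hnorm).2 fun h => hpq (sub_right_injective h)
  have hmid : (1 / 2 : ℝ) • (z - p + (z - q)) = z - (1 / 2 : ℝ) • (p + q) := by module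
  rw [hmid, ← dist_eq_norm, ← dist_eq_norm] at hlt
  exact (hpmin _ hmid_mem).not_gt hlt

theorem sub_min_eq_max_sub_zero {α : Type*} [AddCommGroup α] [LinearOrder α]
    [IsOrderedAddMonoid α] (a b : α) : a - min a b = max (a - b) 0 := by
  rcases le_total a b with h | h
  · simp [min_eq_left h, sub_nonpos.2 h]
  · simp [min_eq_right h, sub_nonneg.2 h]

theorem sq_max_sub_zero_le_sq_sub_sub {a b u : ℝ} (hu : 0 ≤ u) :
    max (a - b) 0 ^ 2 ≤ (a - (b - u)) ^ 2 := by
  rcases le_total (a - b) 0 with h | h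
  · rw [max_eq_right h, zero_pow two_ne_zero]
    exact sq_nonneg _
  · rw [max_eq_left h]
    exact pow_le_pow_left₀ h (by linarith) 2

section DownHull

variable {m : ℕ} {Q : Set (EuclideanSpace ℝ (Fin m))}

theorem convex_extDownHull (hQ : Convex ℝ Q) : Convex ℝ (extDownHull Q) := by
  rintro _ ⟨y₁, hy₁, u₁, hu₁, rfl⟩ _ ⟨y₂, hy₂, u₂, hu₂, rfl⟩ a b ha hb hab
  refine ⟨a • y₁ + b • y₂, hQ hy₁ hy₂ ha hb hab, a • u₁ + b • u₂, fun i => ?_, by module⟩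
  simpa using add_nonneg (mul_nonneg ha (hu₁ i)) (mul_nonneg hb (hu₂ i))

def infPoint (z y : EuclideanSpace ℝ (Fin m)) : EuclideanSpace ℝ (Fin m) :=
  WithLp.toLp 2 fun i => min (z i) (y i)

theorem infPoint_mem_extDownHull {y : EuclideanSpace ℝ (Fin m)} (hy : y ∈ Q)
    (z : EuclideanSpace ℝ (Fin m)) : infPoint z y ∈ extDownHull Q :=
  ⟨y, hy, y - infPoint z y, fun i => by simp [infPoint], by abel⟩

theorem dist_sq_infPoint (z y : EuclideanSpace ℝ (Fin m)) :
    dist z (infPoint z y) ^ 2 = ∑ i, max (z i - y i) 0 ^ 2 := by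
  rw [EuclideanSpace.dist_sq_eq]
  refine sum_congr rfl fun i _ => ?_
  rw [Real.dist_eq, sq_abs, infPoint, PiLp.toLp_apply, sub_min_eq_max_sub_zero]

theorem exists_sum_sq_max_sub_le_dist_sq {z w : EuclideanSpace ℝ (Fin m)}
    (hw : w ∈ extDownHull Q) : ∃ y ∈ Q, ∑ i, max (z i - y i) 0 ^ 2 ≤ dist z w ^ 2 := by
  obtain ⟨y, hy, u, hu, rfl⟩ := hw
  refine ⟨y, hy, ?_⟩
  rw [EuclideanSpace.dist_sq_eq]
  refine sum_le_sum fun i _ => ?_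
  rw [Real.dist_eq, sq_abs, PiLp.sub_apply]
  exact sq_max_sub_zero_le_sq_sub_sub (hu i)

end DownHull

theorem stmt_2_general {m : ℕ} (Q : Set (EuclideanSpace ℝ (Fin m)))
    (hconv : Convex ℝ Q)
    (zt p ystar : EuclideanSpace ℝ (Fin m))
    -- `p` is the metric projection of `zt` onto `Q⁺`
    (hpmem : p ∈ extDownHull Q)
    (hpmin : ∀ w ∈ extDownHull Q, dist zt p ≤ dist zt w)
    -- `ystar` minimizes `‖(zt - y)₊‖²` over `y ∈ Q`
    (hymem : ystar ∈ Q)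
    (hymin : ∀ y ∈ Q,
      (∑ i, max (zt i - ystar i) 0 ^ 2) ≤ ∑ i, max (zt i - y i) 0 ^ 2) :
    ∀ i, p i = min (zt i) (ystar i) := by
  have hqmin : ∀ w ∈ extDownHull Q, dist zt (infPoint zt ystar) ≤ dist zt w := by
    intro w hw
    obtain ⟨y, hy, hyw⟩ := exists_sum_sq_max_sub_le_dist_sq (z := zt) hw
    refine pow_le_pow_iff_left₀ dist_nonneg dist_nonneg two_ne_zero |>.1 ?_
    rw [dist_sq_infPoint]
    exact (hymin y hy).trans hyw
  have hpq := eq_of_forall_dist_le_of_convex (convex_extDownHull hconv) hpmem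
    (infPoint_mem_extDownHull hymem zt) hpmin hqmin
  intro i
  rw [hpq, infPoint, PiLp.toLp_apply]

theorem stmt_2 {m : ℕ} (Q : Set (EuclideanSpace ℝ (Fin m)))
    (hne : Q.Nonempty) (hcl : IsClosed Q) (hconv : Convex ℝ Q)
    (zt p ystar : EuclideanSpace ℝ (Fin m))
    -- `p` is the metric projection of `zt` onto `Q⁺`
    (hpmem : p ∈ extDownHull Q)
    (hpmin : ∀ w ∈ extDownHull Q, dist zt p ≤ dist zt w)
    -- `ystar` minimizes `‖(zt - y)₊‖²` over `y ∈ Q`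
    (hymem : ystar ∈ Q)
    (hymin : ∀ y ∈ Q,
      (∑ i, max (zt i - ystar i) 0 ^ 2) ≤ ∑ i, max (zt i - y i) 0 ^ 2) :
    ∀ i, p i = min (zt i) (ystar i) :=
  stmt_2_general Q hconv zt p ystar hpmem hpmin hymem hymin
end

section
/- (Global subgradient inequality for the non-convex image-feasibility function) Let f₁,...,f_m : ℝ^n → ℝ be convex and C¹, Q⁺ ⊆ ℝ^m nonempty closed convex, x⁰ ∈ ℝ^n, p := P_{Q⁺}(F(x⁰)), ρ := F(x⁰) - p (assumed componentwise ≥ 0), v := J_F(x⁰)ᵀ ρ, and G(x) := ½ dist(F(x), Q⁺)². Then G(y) ≥ G(x⁰) + ⟨v, y - x⁰⟩ for all y ∈ ℝ^n. -/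
/-! With `ρ = F x0 - p`, the convex set `Qp` lies in the half-space `{w | ⟪ρ, w - p⟫ ≤ 0}`, so
`‖ρ‖ * d(u, Qp) ≥ ⟪ρ, u - p⟫` for every `u`, and by AM-GM
`½ d(u, Qp)² ≥ ½ ‖ρ‖² + ⟪ρ, u - F x0⟫`. Taking `u = F y`, it remains to bound `⟪ρ, F y - F x0⟫`
below by `⟪∑ ρᵢ gᵢ, y - x0⟫`: this is the sum of the gradient inequalities of the convex `fᵢ`,
weighted by `ρᵢ ≥ 0`. -/

open scoped RealInnerProductSpace

open AffineMap in
theorem ConvexOn.add_le_of_hasFDerivAt {E : Type*} [NormedAddCommGroup E] [NormedSpace ℝ E]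
    {s : Set E} {f : E → ℝ} {f' : E →L[ℝ] ℝ} {x y : E} (hf : ConvexOn ℝ s f)
    (hx : x ∈ s) (hy : y ∈ s) (hf' : HasFDerivAt f f' x) : f x + f' (y - x) ≤ f y := by
  let ℓ : ℝ →ᵃ[ℝ] E := lineMap x y
  have hline : ConvexOn ℝ (ℓ ⁻¹' s) (f ∘ ℓ) := hf.comp_affineMap ℓ
  have hderiv : HasDerivAt (f ∘ ℓ) (f' (y - x)) 0 := by
    rw [← lineMap_apply_zero x y (k := ℝ)] at hf'
    exact hf'.comp_hasDerivAt 0 hasDerivAt_lineMap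
  have := hline.le_slope_of_hasDerivAt (by simpa [ℓ] using hx) (by simpa [ℓ] using hy) one_pos
    hderiv
  simp only [ℓ, slope_def_field, Function.comp_apply, lineMap_apply_zero, lineMap_apply_one,
    sub_zero, div_one, map_sub] at this ⊢
  linarith

theorem ConvexOn.add_inner_le_of_hasGradientAt {E : Type*} [NormedAddCommGroup E]
    [InnerProductSpace ℝ E] [CompleteSpace E] {s : Set E} {f : E → ℝ} {g x y : E}
    (hf : ConvexOn ℝ s f) (hx : x ∈ s) (hy : y ∈ s) (hg : HasGradientAt f g x) :
    f x + ⟪g, y - x⟫ ≤ f y :=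
  hf.add_le_of_hasFDerivAt hx hy hg

theorem Metric.infDist_eq_dist_of_forall_dist_le {α : Type*} [PseudoMetricSpace α] {s : Set α}
    {x y : α} (hy : y ∈ s) (hmin : ∀ w ∈ s, dist x y ≤ dist x w) : infDist x s = dist x y :=
  (infDist_le_dist_of_mem hy).antisymm ((le_infDist ⟨y, hy⟩).2 hmin)

section Projection

variable {E : Type*} [NormedAddCommGroup E] [InnerProductSpace ℝ E] {K : Set E} {z p : E}

theorem Convex.inner_sub_le_zero_of_forall_dist_le (hK : Convex ℝ K) (hp : p ∈ K)
    (hmin : ∀ w ∈ K, dist z p ≤ dist z w) (w : E) (hw : w ∈ K) : ⟪z - p, w - p⟫ ≤ 0 := by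
  refine (norm_eq_iInf_iff_real_inner_le_zero hK hp).1 ?_ w hw
  simpa only [Metric.infDist_eq_iInf, dist_eq_norm] using
    (Metric.infDist_eq_dist_of_forall_dist_le hp hmin).symm

theorem Convex.half_sq_norm_add_inner_le_half_sq_infDist (hK : Convex ℝ K) (hp : p ∈ K)
    (hmin : ∀ w ∈ K, dist z p ≤ dist z w) (u : E) :
    ‖z - p‖ ^ 2 / 2 + ⟪z - p, u - z⟫ ≤ Metric.infDist u K ^ 2 / 2 := by
  have hlin : ∀ w ∈ K, ‖z - p‖ ^ 2 + ⟪z - p, u - z⟫ ≤ ‖z - p‖ * dist u w := by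
    intro w hw
    have hsplit : ⟪z - p, u - w⟫ = ⟪z - p, u - z⟫ + ‖z - p‖ ^ 2 - ⟪z - p, w - p⟫ := by
      rw [← real_inner_self_eq_norm_sq, ← inner_add_right, ← inner_sub_right]
      congr 1; abel
    have hhalfspace := hK.inner_sub_le_zero_of_forall_dist_le hp hmin w hw
    have hcs := real_inner_le_norm (z - p) (u - w)
    rw [dist_eq_norm]
    linarith
  have hd : ‖z - p‖ ^ 2 + ⟪z - p, u - z⟫ ≤ ‖z - p‖ * Metric.infDist u K := by
    rcases (norm_nonneg (z - p)).eq_or_lt with h0 | hpos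
    · have := hlin p hp
      rw [← h0] at this ⊢
      simpa using this
    · rw [← div_le_iff₀' hpos, Metric.le_infDist ⟨p, hp⟩]
      exact fun w hw => (div_le_iff₀' hpos).2 (hlin w hw)
  nlinarith [sq_nonneg (Metric.infDist u K - ‖z - p‖)]

end Projection

theorem inner_sum_smul_gradient_le_inner_sub {ι E : Type*} [Fintype ι] [NormedAddCommGroup E]
    [InnerProductSpace ℝ E] [CompleteSpace E] {s : Set E} {F : E → EuclideanSpace ℝ ι}
    {g : ι → E} {ρ : EuclideanSpace ℝ ι} {x y : E} (hF : ∀ i, ConvexOn ℝ s (fun x => F x i))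
    (hg : ∀ i, HasGradientAt (fun x => F x i) (g i) x) (hρ : ∀ i, 0 ≤ ρ i)
    (hx : x ∈ s) (hy : y ∈ s) : ⟪∑ i, ρ i • g i, y - x⟫ ≤ ⟪ρ, F y - F x⟫ := by
  simp only [sum_inner, real_inner_smul_left, PiLp.inner_apply, PiLp.sub_apply,
    RCLike.inner_apply, conj_trivial]
  refine Finset.sum_le_sum fun i _ => ?_
  rw [mul_comm (F y i - F x i)]
  have := (hF i).add_inner_le_of_hasGradientAt hx hy (hg i)
  exact mul_le_mul_of_nonneg_left (by linarith) (hρ i)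

theorem stmt_11_general {n m : ℕ} (Qp : Set (EuclideanSpace ℝ (Fin m)))
    (hconv : Convex ℝ Qp)
    (f : Fin m → EuclideanSpace ℝ (Fin n) → ℝ)
    (hf : ∀ i, ConvexOn ℝ Set.univ (f i))
    (F : EuclideanSpace ℝ (Fin n) → EuclideanSpace ℝ (Fin m))
    (hFdef : ∀ x i, F x i = f i x)
    (x0 : EuclideanSpace ℝ (Fin n)) (p : EuclideanSpace ℝ (Fin m))
    -- `p` is the metric projection of `F x0` onto `Qp`
    (hpmem : p ∈ Qp)
    (hpmin : ∀ w ∈ Qp, dist (F x0) p ≤ dist (F x0) w)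
    (ρ : EuclideanSpace ℝ (Fin m)) (hρdef : ρ = F x0 - p)
    (hρnn : ∀ i, 0 ≤ ρ i)
    (g : Fin m → EuclideanSpace ℝ (Fin n))
    (hg : ∀ i, HasGradientAt (f i) (g i) x0)
    (G : EuclideanSpace ℝ (Fin n) → ℝ)
    (hG : ∀ x, G x = (1 / 2) * Metric.infDist (F x) Qp ^ 2) :
    ∀ y, G y ≥ G x0 + ⟪∑ i, ρ i • g i, y - x0⟫ := by
  intro y
  have hcoord : ∀ i, (fun x => F x i) = f i := fun i => funext fun x => hFdef x i
  have hinfDist : Metric.infDist (F x0) Qp = ‖ρ‖ := by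
    rw [Metric.infDist_eq_dist_of_forall_dist_le hpmem hpmin, dist_eq_norm, hρdef]
  have hlin : ⟪∑ i, ρ i • g i, y - x0⟫ ≤ ⟪ρ, F y - F x0⟫ :=
    inner_sum_smul_gradient_le_inner_sub (fun i => hcoord i ▸ hf i) (fun i => hcoord i ▸ hg i)
      hρnn (Set.mem_univ x0) (Set.mem_univ y)
  have hsub : ‖ρ‖ ^ 2 / 2 + ⟪ρ, F y - F x0⟫ ≤ Metric.infDist (F y) Qp ^ 2 / 2 := by
    subst hρdef
    exact hconv.half_sq_norm_add_inner_le_half_sq_infDist hpmem hpmin (F y)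
  rw [hG, hG, hinfDist]
  linarith

theorem stmt_11 {n m : ℕ} (Qp : Set (EuclideanSpace ℝ (Fin m)))
    (hne : Qp.Nonempty) (hcl : IsClosed Qp) (hconv : Convex ℝ Qp)
    (f : Fin m → EuclideanSpace ℝ (Fin n) → ℝ)
    (hf : ∀ i, ConvexOn ℝ Set.univ (f i))
    (hf1 : ∀ i, ContDiff ℝ 1 (f i))
    (F : EuclideanSpace ℝ (Fin n) → EuclideanSpace ℝ (Fin m))
    (hFdef : ∀ x i, F x i = f i x)
    (x0 : EuclideanSpace ℝ (Fin n)) (p : EuclideanSpace ℝ (Fin m))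
    -- `p` is the metric projection of `F x0` onto `Qp`
    (hpmem : p ∈ Qp)
    (hpmin : ∀ w ∈ Qp, dist (F x0) p ≤ dist (F x0) w)
    (ρ : EuclideanSpace ℝ (Fin m)) (hρdef : ρ = F x0 - p)
    (hρnn : ∀ i, 0 ≤ ρ i)
    (g : Fin m → EuclideanSpace ℝ (Fin n))
    (hg : ∀ i, HasGradientAt (f i) (g i) x0)
    (G : EuclideanSpace ℝ (Fin n) → ℝ)
    (hG : ∀ x, G x = (1 / 2) * Metric.infDist (F x) Qp ^ 2) :
    ∀ y, G y ≥ G x0 + ⟪∑ i, ρ i • g i, y - x0⟫ :=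
  stmt_11_general Qp hconv f hf F hFdef x0 p hpmem hpmin ρ hρdef hρnn g hg G hG
end
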